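/- Let Ω = List ℕ → ℝ with the product σ-algebra, let U = volume.restrict (Set.Icc (0:ℝ) 1) be the uniform probability measure on ℝ, and let μ = Measure.infinitePi (fun _ : List ℕ => U) be the infinite product probability measure on Ω. Define γ : Ω → Ω × Ω by γ ω = (fun l => ω (0 :: l), fun l => ω (match l with | [] => [] | i :: t => (i+1) :: t)). Then γ is a measurable bijection and is measure-preserving from (Ω, μ) to (Ω × Ω, μ.prod μ): Measure.map γ μ = μ.prod μ. -/

import Mathlib

/-!
The splitting map is a reindexing of coordinates along the bijection
`List ℕ ⊕ List ℕ ≃ List ℕ` (paths through the first child of the root versus all other paths),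
followed by the identification of functions on a sum type with pairs of functions.
An infinite product of probability measures is invariant under reindexing and factors over a
disjoint union of index sets, and `μ` is that infinite product by uniqueness of projective limits.
-/

open MeasureTheory

namespace MeasureTheory.Measure

variable {ι κ : Type*} {X : ι ⊕ κ → Type*} [∀ i, MeasurableSpace (X i)]
  (μ : ∀ i, Measure (X i)) [∀ i, IsProbabilityMeasure (μ i)]

theorem infinitePi_map_sumPiEquivProdPi :
    (infinitePi μ).map (MeasurableEquiv.sumPiEquivProdPi X) =
      (infinitePi fun i ↦ μ (.inl i)).prod (infinitePi fun j ↦ μ (.inr j)) := by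
  rw [MeasurableEquiv.map_apply_eq_iff_map_symm_apply_eq]
  refine (eq_infinitePi μ fun s t ht ↦ ?_).symm
  have hpre : (MeasurableEquiv.sumPiEquivProdPi X).symm ⁻¹' Set.pi s t =
      Set.pi s.toLeft (fun i ↦ t (.inl i)) ×ˢ Set.pi s.toRight (fun j ↦ t (.inr j)) := by
    ext ⟨f, g⟩
    simp [Sum.forall, MeasurableEquiv.coe_sumPiEquivProdPi_symm]
  rw [map_apply (MeasurableEquiv.measurable _) (.pi s.countable_toSet fun i _ ↦ ht i), hpre,
    prod_prod, infinitePi_pi _ fun i _ ↦ ht _, infinitePi_pi _ fun i _ ↦ ht _,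
    Finset.prod_sum_eq_prod_toLeft_mul_prod_toRight]

end MeasureTheory.Measure

def treePathSumEquiv : List ℕ ⊕ List ℕ ≃ List ℕ where
  toFun
    | .inl t => 0 :: t
    | .inr [] => []
    | .inr (i :: t) => (i + 1) :: t
  invFun
    | [] => .inr []
    | 0 :: t => .inl t
    | (i + 1) :: t => .inr (i :: t)
  left_inv s := by rcases s with t | _ | ⟨i, t⟩ <;> rfl
  right_inv l := by rcases l with _ | ⟨_ | i, t⟩ <;> rfl

def splitTree (α : Type*) [MeasurableSpace α] : (List ℕ → α) ≃ᵐ (List ℕ → α) × (List ℕ → α) :=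
  (MeasurableEquiv.piCongrLeft (fun _ ↦ α) treePathSumEquiv).symm.trans
    (MeasurableEquiv.sumPiEquivProdPi fun _ ↦ α)

theorem infinitePi_map_splitTree {α : Type*} [MeasurableSpace α] (ν : Measure α)
    [IsProbabilityMeasure ν] :
    (Measure.infinitePi fun _ : List ℕ ↦ ν).map (splitTree α) =
      (Measure.infinitePi fun _ ↦ ν).prod (Measure.infinitePi fun _ ↦ ν) := by
  rw [splitTree, MeasurableEquiv.coe_trans, ← Measure.map_map (MeasurableEquiv.measurable _)
    (MeasurableEquiv.measurable _)]
  have hreindex : (Measure.infinitePi fun _ : List ℕ ↦ ν).map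
      (MeasurableEquiv.piCongrLeft (fun _ ↦ α) treePathSumEquiv).symm =
      Measure.infinitePi fun _ ↦ ν := by
    rw [eq_comm, ← MeasurableEquiv.map_apply_eq_iff_map_symm_apply_eq]
    exact Measure.infinitePi_map_piCongrLeft (fun _ ↦ ν) treePathSumEquiv
  rw [hreindex]
  exact Measure.infinitePi_map_sumPiEquivProdPi _

theorem splitTree_measurable_bijective_measurePreserving
    (U : Measure ℝ) (hU : U = volume.restrict (Set.Icc (0:ℝ) 1))
    (μ : Measure (List ℕ → ℝ))
    (hμ : IsProjectiveLimit μ (fun J : Finset (List ℕ) => Measure.pi fun _ : J => U))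
    (γ : (List ℕ → ℝ) → (List ℕ → ℝ) × (List ℕ → ℝ))
    (hγ : γ = fun ω => (fun l => ω (0 :: l),
        fun l => ω (match l with | [] => [] | i :: t => (i + 1) :: t))) :
    Measurable γ ∧ Function.Bijective γ ∧ Measure.map γ μ = μ.prod μ := by
  have : IsProbabilityMeasure U := ⟨by simp [hU]⟩
  obtain rfl : μ = Measure.infinitePi fun _ ↦ U :=
    hμ.unique (Measure.isProjectiveLimit_infinitePi _)
  obtain rfl : γ = splitTree ℝ := by
    subst hγ
    ext ω l
    · rfl
    · rcases l with _ | ⟨i, t⟩ <;> rfl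
  exact ⟨(splitTree ℝ).measurable, (splitTree ℝ).bijective, infinitePi_map_splitTree U⟩
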